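/- arXiv:2209.06655 — 2 statements merged into one kernel-verified Lean document; each statement's English description precedes it below -/
import Mathlib

section
/- Let B, C be finite subsets of 𝕀. The following are equivalent: (1) there exists a nonempty A ∈ P_fci(𝕀) with l(A) = B and r(A) = C; (2) B ≠ ∅, min(B ∪ C) ∈ B, and either (a) max(B ∪ C) ∈ C and 𝔰⁻¹(B ∪ C, C ∖ B) = B ∖ C, or (b) max(B ∪ C) ∈ B ∖ C and 𝔰⁻¹(B ∪ C, C ∖ B) ∪ {max(B ∪ C)} = B ∖ C. -/
namespace MCpaper

open FirstOrder Language Structure Set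

/-- `𝕀`: a dense linear order with a least element `0` and no greatest element,
concretely the nonnegative rationals. -/
abbrev II : Type := NNRat

/-! ### Set-level operations associated to a linear order -/

section SetOps

variable {α : Type*} [LinearOrder α]

/-- The singleton of the least element of `A` (as a set; empty if `A` has no least element). -/
def minSet (A : Set α) : Set α := {i ∈ A | ∀ j ∈ A, i ≤ j}

/-- The singleton of the greatest element of `A` (as a set; empty if `A` has no greatest
element). -/
def maxSet (A : Set α) : Set α := {i ∈ A | ∀ j ∈ A, j ≤ i}

/-- `sInvSet A B = {i ∈ A : i has a successor in the suborder A and that successor lies in B}`. -/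
def sInvSet (A B : Set α) : Set α :=
  {i ∈ A | ∃ j ∈ A, i < j ∧ (∀ k ∈ A, i < k → j ≤ k) ∧ j ∈ B}

lemma minSet_subset (A : Set α) : minSet A ⊆ A := sep_subset _ _

lemma minSet_subsingleton (A : Set α) : (minSet A).Subsingleton :=
  fun x hx y hy => le_antisymm (hx.2 y hy.1) (hy.2 x hx.1)

lemma maxSet_subsingleton (A : Set α) : (maxSet A).Subsingleton :=
  fun x hx y hy => le_antisymm (hy.2 x hx.1) (hx.2 y hy.1)
lemma maxSet_subset (A : Set α) : maxSet A ⊆ A := sep_subset _ _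
lemma sInvSet_subset (A B : Set α) : sInvSet A B ⊆ A := sep_subset _ _

end SetOps

/-! ### The languages -/

/-- Relation symbols of `L_MO = {⊆, ∃<}`. -/
inductive MORel : ℕ → Type
  | sub : MORel 2
  | elt : MORel 2

/-- The language `L_MO = {⊆, ∃<}` with two binary relation symbols. -/
def LMO : Language := ⟨fun _ => Empty, MORel⟩

/-- Function symbols of `L_WSO`. -/
inductive WSOFunc : ℕ → Type
  | union : WSOFunc 2
  | inter : WSOFunc 2
  | bot : WSOFunc 0
  | zero : WSOFunc 0
  | min : WSOFunc 1
  | max : WSOFunc 1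
  | sinv : WSOFunc 2

/-- The language `L_WSO = {∪, ∩, ⊥, 𝟎, min, max, 𝔰⁻¹}`. -/
def LWSO : Language := ⟨WSOFunc, fun _ => Empty⟩

/-- Function symbols of `L_MSOFin`. -/
inductive MSOFinFunc : ℕ → Type
  | union : MSOFinFunc 2
  | inter : MSOFinFunc 2
  | bot : MSOFinFunc 0
  | zero : MSOFinFunc 0
  | zeroStar : MSOFinFunc 0
  | sinv : MSOFinFunc 1

/-- The language `L_MSOFin = {∪, ∩, ⊥, 𝟎, 𝟎*, s⁻¹}`. -/
def LMSOFin : Language := ⟨MSOFinFunc, fun _ => Empty⟩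

/-- Function symbols of `L_L`. -/
inductive LLFunc : ℕ → Type
  | union : LLFunc 2
  | inter : LLFunc 2
  | bot : LLFunc 0
  | zero : LLFunc 0
  | min : LLFunc 1
  | max : LLFunc 1
  | left : LLFunc 1
  | right : LLFunc 1

/-- The language `L_L = {∪, ∩, ⊥, 𝟎, min, max, l, r}`. -/
def LL : Language := ⟨LLFunc, fun _ => Empty⟩

/-! ### `WSO(𝕀)` as an `L_WSO`-structure and as an `L_MO`-structure -/

/-- The universe of `WSO(𝕀)`: finite subsets of `𝕀`. -/
abbrev FinSub : Type := {A : Set II // A.Finite}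

/-- `WSO(𝕀)` as an `L_WSO`-structure. -/
instance finSubLWSO : LWSO.Structure FinSub where
  funMap {n} f :=
    match f with
    | .union => fun v => ⟨(v 0).1 ∪ (v 1).1, (v 0).2.union (v 1).2⟩
    | .inter => fun v => ⟨(v 0).1 ∩ (v 1).1, (v 0).2.inter_of_left _⟩
    | .bot => fun _ => ⟨∅, finite_empty⟩
    | .zero => fun _ => ⟨{0}, finite_singleton _⟩
    | .min => fun v => ⟨minSet (v 0).1, (v 0).2.subset (minSet_subset _)⟩
    | .max => fun v => ⟨maxSet (v 0).1, (v 0).2.subset (maxSet_subset _)⟩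
    | .sinv => fun v => ⟨sInvSet (v 0).1 (v 1).1, (v 0).2.subset (sInvSet_subset _ _)⟩
  RelMap {n} r := Empty.elim r

/-- `WSO(α)` as an `L_MO`-structure, for any linearly ordered `α` (here specialised to `𝕀`). -/
instance finSubLMO : LMO.Structure FinSub where
  funMap {n} f := Empty.elim f
  RelMap {n} r :=
    match r with
    | .sub => fun v => (v 0).1 ⊆ (v 1).1
    | .elt => fun v => ∃ a ∈ (v 0).1, ∃ b ∈ (v 1).1, a < b

/-- `MSO(α)`: the `L_MO`-structure on the full powerset of a linear order `α`. -/
instance powersetLMO (α : Type*) [LinearOrder α] : LMO.Structure (Set α) where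
  funMap {n} f := Empty.elim f
  RelMap {n} r :=
    match r with
    | .sub => fun v => v 0 ⊆ v 1
    | .elt => fun v => ∃ a ∈ v 0, ∃ b ∈ v 1, a < b

/-! ### `MSO(n)` and the pseudofinite theory `T_MSOFin` -/

/-- `MSO(n)` as an `L_MSOFin`-structure on the powerset of `{0, …, n-1}`. -/
instance msoFinStructure (n : ℕ) : LMSOFin.Structure (Set (Fin n)) where
  funMap {m} f :=
    match f with
    | .union => fun v => v 0 ∪ v 1
    | .inter => fun v => v 0 ∩ v 1
    | .bot => fun _ => ∅
    | .zero => fun _ => {i : Fin n | (i : ℕ) = 0}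
    | .zeroStar => fun _ => {i : Fin n | (i : ℕ) = n - 1}
    | .sinv => fun v => {i : Fin n | ∃ j : Fin n, (j : ℕ) = (i : ℕ) + 1 ∧ j ∈ v 0}
  RelMap {m} r := Empty.elim r

/-- The pseudofinite monadic second order theory of linear order: the set of `L_MSOFin`-sentences
true in `MSO(n)` for every `n`. -/
def TMSOFin : LMSOFin.Theory := {φ : LMSOFin.Sentence | ∀ n : ℕ, Set (Fin n) ⊨ φ}

/-! ### Abstract `L_MO`-structures: atoms and interval restrictions -/

section LMOAbstract

variable {M : Type*} [LMO.Structure M]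

/-- The interpretation of `⊆` in an `L_MO`-structure. -/
def mSub (a b : M) : Prop := RelMap (L := LMO) MORel.sub ![a, b]

/-- The interpretation of `∃<` in an `L_MO`-structure. -/
def mLt (a b : M) : Prop := RelMap (L := LMO) MORel.elt ![a, b]

/-- `b` is the least element of the partial order `(M, ⊆)`. -/
def IsBotM (b : M) : Prop := ∀ x : M, mSub b x

/-- `a` is an atom of `(M, ⊆)`: a minimal element strictly above the least element. -/
def IsAtomM (a : M) : Prop :=
  ∃ b : M, IsBotM b ∧ a ≠ b ∧ ∀ x : M, mSub x a → x = a ∨ x = b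

/-- The carrier `{B : M ∣ every atom X ⊆ B satisfies (i ∃< X ∨ X = i) ∧ X ∃< j}`
of the restriction `M ↾ [i,j)`. -/
def intervalRes (i j : M) : Set M :=
  {B : M | ∀ X : M, IsAtomM X → mSub X B → (mLt i X ∨ X = i) ∧ mLt X j}

/-- The `L_MO`-structure induced on a subset of an `L_MO`-structure. -/
def inducedLMO (s : Set M) : LMO.Structure s where
  funMap {n} f := Empty.elim f
  RelMap {n} r v := RelMap (M := M) r fun k => (v k : M)

end LMOAbstract

/-! ### Abstract `L_WSO`-structures, restrictions to elements -/

section LWSOAbstract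

variable {M : Type*} [LWSO.Structure M]

/-- The interpretation of `∪` in an `L_WSO`-structure. -/
def wUnion (a b : M) : M := funMap (L := LWSO) WSOFunc.union ![a, b]

/-- The interpretation of `∩` in an `L_WSO`-structure. -/
def wInter (a b : M) : M := funMap (L := LWSO) WSOFunc.inter ![a, b]

/-- The interpretation of `⊥` in an `L_WSO`-structure. -/
def wBot : M := funMap (L := LWSO) (M := M) WSOFunc.bot ![]

/-- The interpretation of `𝟎` in an `L_WSO`-structure. -/
def wZero : M := funMap (L := LWSO) (M := M) WSOFunc.zero ![]

/-- The interpretation of `min` in an `L_WSO`-structure. -/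
def wMin (a : M) : M := funMap (L := LWSO) WSOFunc.min ![a]

/-- The interpretation of `max` in an `L_WSO`-structure. -/
def wMax (a : M) : M := funMap (L := LWSO) WSOFunc.max ![a]

/-- The interpretation of `𝔰⁻¹` in an `L_WSO`-structure. -/
def wSInv (a b : M) : M := funMap (L := LWSO) WSOFunc.sinv ![a, b]

variable (M)

/-- The universe `{B : M ∣ B ∩ A = B}` of the restriction `M ↾ A`. -/
def Res (A : M) : Type _ := {B : M // wInter B A = B}

/-- The (true in every model of `Th(WSO(𝕀))`) closure conditions saying that
`{B : M ∣ B ∩ A = B}` is closed under the operations of the restricted structure `M ↾ A`. -/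
structure ResClosed (A : M) : Prop where
  union : ∀ B C : M, wInter B A = B → wInter C A = C → wInter (wUnion B C) A = wUnion B C
  inter : ∀ B C : M, wInter B A = B → wInter C A = C → wInter (wInter B C) A = wInter B C
  bot : wInter (wBot : M) A = wBot
  zero : wInter (wMin A) A = wMin A
  zeroStar : wInter (wMax A) A = wMax A
  sinv : ∀ B : M, wInter B A = B → wInter (wSInv A B) A = wSInv A B

variable {M}

/-- The restriction `M ↾ A` as an `L_MSOFin`-structure: `∪`, `∩`, `⊥` are inherited from `M`,
`𝟎` is `min(A)`, `𝟎*` is `max(A)`, and `s⁻¹` is `B ↦ 𝔰⁻¹(A, B)` computed in `M`. -/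
def resStructure {A : M} (hc : ResClosed M A) : LMSOFin.Structure (Res M A) where
  funMap {m} f :=
    match f with
    | .union => fun v => ⟨wUnion (v 0).1 (v 1).1, hc.union _ _ (v 0).2 (v 1).2⟩
    | .inter => fun v => ⟨wInter (v 0).1 (v 1).1, hc.inter _ _ (v 0).2 (v 1).2⟩
    | .bot => fun _ => ⟨wBot, hc.bot⟩
    | .zero => fun _ => ⟨wMin A, hc.zero⟩
    | .zeroStar => fun _ => ⟨wMax A, hc.zeroStar⟩
    | .sinv => fun v => ⟨wSInv A (v 0).1, hc.sinv _ (v 0).2⟩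
  RelMap {m} r := Empty.elim r

/-- `⌊Ā⌋ = 𝟎 ∪ A₁ ∪ … ∪ Aₙ`, computed in `M`. -/
def wFloor {n : ℕ} (A : Fin n → M) : M := (List.ofFn A).foldl wUnion wZero

end LWSOAbstract

/-! ### Complexity classes of formulas -/

section Complexity

variable {L : Language} {α : Type*}

/-- Positive existential formulas: those built from atomic formulas using only `∧`, `∨`
and `∃`. -/
inductive IsPosEx : {n : ℕ} → L.BoundedFormula α n → Prop
  | equal {n} (t₁ t₂ : L.Term (α ⊕ Fin n)) : IsPosEx (BoundedFormula.equal t₁ t₂)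
  | rel {n k} (R : L.Relations k) (ts : Fin k → L.Term (α ⊕ Fin n)) :
      IsPosEx (BoundedFormula.rel R ts)
  | inf {n} {φ ψ : L.BoundedFormula α n} : IsPosEx φ → IsPosEx ψ → IsPosEx (φ ⊓ ψ)
  | sup {n} {φ ψ : L.BoundedFormula α n} : IsPosEx φ → IsPosEx ψ → IsPosEx (φ ⊔ ψ)
  | ex {n} {φ : L.BoundedFormula α (n + 1)} : IsPosEx φ → IsPosEx φ.ex

/-- Existential formulas: a block of existential quantifiers applied to a
quantifier-free formula. -/
inductive IsExist : {n : ℕ} → L.BoundedFormula α n → Prop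
  | of_isQF {n} {φ : L.BoundedFormula α n} : φ.IsQF → IsExist φ
  | ex {n} {φ : L.BoundedFormula α (n + 1)} : IsExist φ → IsExist φ.ex

end Complexity

/-! ### Finite unions of closed intervals and the structure `L(𝕀)` -/

/-- `A` is a finite union of closed intervals of `𝕀` (each of the form `[i,j]` or `[i,∞)`;
intervals of the form `(-∞, j]` coincide with `[0, j]` since `𝕀` has least element `0`). -/
def IsFCI (A : Set II) : Prop :=
  ∃ (k : ℕ) (f : Fin k → Set II),
    (∀ m : Fin k, (∃ i j : II, f m = Set.Icc i j) ∨ ∃ i : II, f m = Set.Ici i) ∧ A = ⋃ m, f m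

/-- The universe of `L(𝕀)`: finite unions of closed intervals of `𝕀`. -/
abbrev FCI : Type := {A : Set II // IsFCI A}

/-- The set of left endpoints of `A`. -/
def lSet (A : Set II) : Set II := {i ∈ A | i = 0 ∨ ∃ i' < i, Set.Ioo i' i ∩ A = ∅}

/-- The set of right endpoints of `A`. -/
def rSet (A : Set II) : Set II := {i ∈ A | ∃ i'', i < i'' ∧ Set.Ioo i i'' ∩ A = ∅}

lemma isFCI_empty : IsFCI (∅ : Set II) := ⟨0, Fin.elim0, fun m => m.elim0, by simp⟩

lemma isFCI_singleton (i : II) : IsFCI {i} :=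
  ⟨1, fun _ => Set.Icc i i, fun _ => Or.inl ⟨i, i, rfl⟩, by simp⟩

lemma IsFCI.union {A B : Set II} (hA : IsFCI A) (hB : IsFCI B) : IsFCI (A ∪ B) := by
  obtain ⟨k, f, hf, rfl⟩ := hA
  obtain ⟨l, g, hg, rfl⟩ := hB
  refine ⟨k + l, fun m => Sum.elim f g (finSumFinEquiv.symm m), fun m => ?_, ?_⟩
  · dsimp only
    rcases finSumFinEquiv.symm m with i | j
    · exact hf i
    · exact hg j
  · ext x
    simp only [Set.mem_union, Set.mem_iUnion]
    constructor
    · rintro (⟨i, hi⟩ | ⟨j, hj⟩)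
      · exact ⟨finSumFinEquiv (Sum.inl i), by simpa using hi⟩
      · exact ⟨finSumFinEquiv (Sum.inr j), by simpa using hj⟩
    · rintro ⟨m, hm⟩
      rcases h : finSumFinEquiv.symm m with i | j
      · rw [h] at hm; exact Or.inl ⟨i, hm⟩
      · rw [h] at hm; exact Or.inr ⟨j, hm⟩

lemma Icc_inter_Ici' {a b c : II} : Set.Icc a b ∩ Set.Ici c = Set.Icc (a ⊔ c) b := by
  ext x
  simp only [Set.mem_inter_iff, Set.mem_Icc, Set.mem_Ici, sup_le_iff]
  tauto

lemma IsFCI.inter {A B : Set II} (hA : IsFCI A) (hB : IsFCI B) : IsFCI (A ∩ B) := by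
  obtain ⟨k, f, hf, rfl⟩ := hA
  obtain ⟨l, g, hg, rfl⟩ := hB
  refine ⟨k * l, fun m => f (finProdFinEquiv.symm m).1 ∩ g (finProdFinEquiv.symm m).2,
    fun m => ?_, ?_⟩
  · dsimp only
    rcases hf (finProdFinEquiv.symm m).1 with ⟨a, b, hab⟩ | ⟨a, ha⟩ <;>
      rcases hg (finProdFinEquiv.symm m).2 with ⟨c, d, hcd⟩ | ⟨c, hc⟩
    · exact Or.inl ⟨a ⊔ c, b ⊓ d, by rw [hab, hcd, Set.Icc_inter_Icc]⟩
    · exact Or.inl ⟨a ⊔ c, b, by rw [hab, hc, Icc_inter_Ici']⟩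
    · exact Or.inl ⟨c ⊔ a, d, by rw [ha, hcd, Set.inter_comm, Icc_inter_Ici']⟩
    · exact Or.inr ⟨a ⊔ c, by rw [ha, hc, Set.Ici_inter_Ici]⟩
  · ext x
    simp only [Set.mem_inter_iff, Set.mem_iUnion]
    constructor
    · rintro ⟨⟨i, hi⟩, ⟨j, hj⟩⟩
      exact ⟨finProdFinEquiv (i, j), by simpa using ⟨hi, hj⟩⟩
    · rintro ⟨m, hm⟩
      exact ⟨⟨_, hm.1⟩, ⟨_, hm.2⟩⟩

lemma isFCI_minSet (A : Set II) : IsFCI (minSet A) := by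
  rcases (minSet_subsingleton A).eq_empty_or_singleton with h | ⟨i, h⟩
  · rw [h]; exact isFCI_empty
  · rw [h]; exact isFCI_singleton i

lemma isFCI_maxSet (A : Set II) : IsFCI (maxSet A) := by
  rcases (maxSet_subsingleton A).eq_empty_or_singleton with h | ⟨i, h⟩
  · rw [h]; exact isFCI_empty
  · rw [h]; exact isFCI_singleton i

lemma finite_isFCI {A : Set II} (hA : A.Finite) : IsFCI A :=
  Set.Finite.induction_on A hA isFCI_empty
    (fun _ _ ih => by rw [Set.insert_eq]; exact (isFCI_singleton _).union ih)

lemma IsFCI.lSet_finite {A : Set II} (hA : IsFCI A) : (lSet A).Finite := by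
  obtain ⟨k, f, hf, rfl⟩ := hA
  have hsub : lSet (⋃ m, f m) ⊆ {0} ∪ ⋃ m, minSet (f m) := by
    rintro i ⟨hiA, hi⟩
    rcases hi with rfl | ⟨i', hi'lt, hgap⟩
    · exact Set.mem_union_left _ rfl
    · obtain ⟨m, him⟩ := Set.mem_iUnion.1 hiA
      refine Set.mem_union_right _ (Set.mem_iUnion.2 ⟨m, him, fun j hj => ?_⟩)
      by_contra hji
      push_neg at hji
      obtain ⟨x, hx1, hx2⟩ := exists_between (max_lt hi'lt hji : max i' j < i)
      have hxfm : x ∈ f m := by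
        rcases hf m with ⟨a, b, hab⟩ | ⟨a, ha⟩
        · rw [hab] at him hj ⊢
          exact ⟨hj.1.trans ((le_max_right i' j).trans hx1.le), hx2.le.trans him.2⟩
        · rw [ha] at hj ⊢
          exact hj.trans ((le_max_right i' j).trans hx1.le)
      have hmem : x ∈ Set.Ioo i' i ∩ ⋃ m, f m :=
        ⟨⟨(le_max_left i' j).trans_lt hx1, hx2⟩, Set.mem_iUnion.2 ⟨m, hxfm⟩⟩
      rw [hgap] at hmem
      exact hmem
  exact ((Set.finite_singleton 0).union
    (Set.finite_iUnion fun m => (minSet_subsingleton (f m)).finite)).subset hsub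

lemma IsFCI.rSet_finite {A : Set II} (hA : IsFCI A) : (rSet A).Finite := by
  obtain ⟨k, f, hf, rfl⟩ := hA
  have hsub : rSet (⋃ m, f m) ⊆ ⋃ m, maxSet (f m) := by
    rintro i ⟨hiA, i'', hi''gt, hgap⟩
    obtain ⟨m, him⟩ := Set.mem_iUnion.1 hiA
    refine Set.mem_iUnion.2 ⟨m, him, fun j hj => ?_⟩
    by_contra hij
    push_neg at hij
    obtain ⟨x, hx1, hx2⟩ := exists_between (lt_min hi''gt hij : i < min i'' j)
    have hxfm : x ∈ f m := by
      rcases hf m with ⟨a, b, hab⟩ | ⟨a, ha⟩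
      · rw [hab] at him hj ⊢
        exact ⟨him.1.trans hx1.le, (hx2.le.trans (min_le_right i'' j)).trans hj.2⟩
      · rw [ha] at him ⊢
        exact him.trans hx1.le
    have hmem : x ∈ Set.Ioo i i'' ∩ ⋃ m, f m :=
      ⟨⟨hx1, hx2.trans_le (min_le_left i'' j)⟩, Set.mem_iUnion.2 ⟨m, hxfm⟩⟩
    rw [hgap] at hmem
    exact hmem
  exact (Set.finite_iUnion fun m => (maxSet_subsingleton (f m)).finite).subset hsub

/-- `L(𝕀)` as an `L_L`-structure. -/
instance fciLL : LL.Structure FCI where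
  funMap {m} f :=
    match f with
    | .union => fun v => ⟨(v 0).1 ∪ (v 1).1, (v 0).2.union (v 1).2⟩
    | .inter => fun v => ⟨(v 0).1 ∩ (v 1).1, (v 0).2.inter (v 1).2⟩
    | .bot => fun _ => ⟨∅, isFCI_empty⟩
    | .zero => fun _ => ⟨{0}, isFCI_singleton 0⟩
    | .min => fun v => ⟨minSet (v 0).1, isFCI_minSet _⟩
    | .max => fun v => ⟨maxSet (v 0).1, isFCI_maxSet _⟩
    | .left => fun v => ⟨lSet (v 0).1, finite_isFCI (v 0).2.lSet_finite⟩
    | .right => fun v => ⟨rSet (v 0).1, finite_isFCI (v 0).2.rSet_finite⟩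
  RelMap {m} r := Empty.elim r

universe u v

/-!
In terms of one-sided neighbourhoods, `i ∈ l(A)` iff `i ∈ A` and `A` misses a left
neighbourhood of `i`, and dually for `r(A)`. In an FCI set every point is joined through `A`
leftwards to a left endpoint, and rightwards to a right endpoint or to `∞`. Hence, in
`D = l(A) ∪ r(A)`, a left endpoint `b ∉ r(A)` is either `max D` (with `[b, ∞) ⊆ A`) or followed by
a point of `r(A) \ l(A)`, and a point followed by one of `r(A) \ l(A)` lies in `l(A) \ r(A)`.
Conversely, under these conditions the union over `b ∈ B` of `[b, first point of C at or after b]`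
(or `[b, ∞)` if there is none) has exactly `B` and `C` as endpoints.
-/

open Filter Topology

section LinearOrder

variable {α : Type*} [LinearOrder α]

lemma minSet_nonempty {D : Set α} (hD : D.Finite) (hne : D.Nonempty) : (minSet D).Nonempty :=
  exists_min_image D id hD hne

lemma maxSet_nonempty {D : Set α} (hD : D.Finite) (hne : D.Nonempty) : (maxSet D).Nonempty :=
  exists_max_image D id hD hne

lemma exists_succ_mem_of_lt {D : Set α} (hD : D.Finite) {i c : α} (hc : c ∈ D) (hic : i < c) :
    ∃ j ∈ D, i < j ∧ j ≤ c ∧ ∀ k ∈ D, i < k → j ≤ k := by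
  obtain ⟨j, ⟨hjD, hij⟩, hjmin⟩ :=
    exists_min_image {d ∈ D | i < d} id (hD.subset (sep_subset _ _)) ⟨c, hc, hic⟩
  exact ⟨j, hjD, hij, hjmin c ⟨hc, hic⟩, fun k hk hik => hjmin k ⟨hk, hik⟩⟩

lemma exists_pred_mem_of_lt {D : Set α} (hD : D.Finite) {m c : α} (hm : m ∈ D) (hmc : m < c) :
    ∃ p ∈ D, p < c ∧ (∀ k ∈ D, k < c → k ≤ p) ∧ ∀ k ∈ D, p < k → c ≤ k := by
  obtain ⟨p, ⟨hpD, hpc⟩, hpmax⟩ :=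
    exists_max_image {d ∈ D | d < c} id (hD.subset (sep_subset _ _)) ⟨m, hm, hmc⟩
  exact ⟨p, hpD, hpc, fun k hk hkc => hpmax k ⟨hk, hkc⟩,
    fun k hk hpk => not_lt.1 fun hkc => (hpmax k ⟨hk, hkc⟩).not_gt hpk⟩

lemma sInvSet_cases_iff {B C : Set α} (hmax : (maxSet (B ∪ C)).Nonempty) :
    (((∃ m ∈ maxSet (B ∪ C), m ∈ C) ∧ sInvSet (B ∪ C) (C \ B) = B \ C) ∨
        ((∃ m ∈ maxSet (B ∪ C), m ∈ B \ C) ∧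
          sInvSet (B ∪ C) (C \ B) ∪ maxSet (B ∪ C) = B \ C)) ↔
      sInvSet (B ∪ C) (C \ B) ⊆ B \ C ∧ B \ C ⊆ sInvSet (B ∪ C) (C \ B) ∪ maxSet (B ∪ C) := by
  constructor
  · rintro (⟨-, h⟩ | ⟨-, h⟩)
    · exact ⟨h.subset, h.superset.trans subset_union_left⟩
    · exact ⟨subset_union_left.trans h.subset, h.superset⟩
  · rintro ⟨hsub, hsup⟩
    obtain ⟨m, hm⟩ := hmax
    by_cases hmC : m ∈ C
    · refine Or.inl ⟨⟨m, hm, hmC⟩, hsub.antisymm fun b hb => ?_⟩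
      rcases hsup hb with h | h
      · exact h
      · exact absurd (maxSet_subsingleton _ h hm ▸ hmC) hb.2
    · have hmB : m ∈ B \ C := ⟨hm.1.resolve_right hmC, hmC⟩
      refine Or.inr ⟨⟨m, hm, hmB⟩, (union_subset hsub fun x hx => ?_).antisymm hsup⟩
      rwa [maxSet_subsingleton _ hx hm]

variable [TopologicalSpace α] [OrderClosedTopology α]

lemma eventually_nhdsLT_forall_lt {D : Set α} (hD : D.Finite) (b : α) :
    ∀ᶠ y in 𝓝[<] b, ∀ d ∈ D, d < b → d < y := by
  refine hD.eventually_all.2 fun d _ => ?_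
  by_cases hdb : d < b
  · filter_upwards [Ioo_mem_nhdsLT hdb] with y hy using fun _ => hy.1
  · exact Eventually.of_forall fun _ h => absurd h hdb

lemma eventually_nhdsGT_forall_lt {D : Set α} (hD : D.Finite) (c : α) :
    ∀ᶠ y in 𝓝[>] c, ∀ d ∈ D, c < d → y < d := by
  refine hD.eventually_all.2 fun d _ => ?_
  by_cases hcd : c < d
  · filter_upwards [Ioo_mem_nhdsGT hcd] with y hy using fun _ => hy.2
  · exact Eventually.of_forall fun _ h => absurd h hcd

lemma eventually_nhdsLT_notMem_or {J : Set α} (hJ : (∃ i j, J = Icc i j) ∨ ∃ i, J = Ici i)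
    (b : α) : (∀ᶠ y in 𝓝[<] b, y ∉ J) ∨ ∃ a ∈ minSet J, a < b ∧ Icc a b ⊆ J := by
  rcases hJ with ⟨i, j, rfl⟩ | ⟨i, rfl⟩
  · by_cases h : i < b ∧ b ≤ j
    · exact Or.inr ⟨i, ⟨⟨le_rfl, h.1.le.trans h.2⟩, fun y hy => hy.1⟩, h.1,
        Icc_subset_Icc_right h.2⟩
    rcases not_and_or.1 h with hib | hjb
    · exact Or.inl <| eventually_mem_nhdsWithin.mono fun y (hyb : y < b) hy =>
        hib (hy.1.trans_lt hyb)
    · exact Or.inl <| mem_of_superset (Ioo_mem_nhdsLT (not_le.1 hjb)) fun y hy hy' =>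
        hy.1.not_ge hy'.2
  · by_cases h : i < b
    · exact Or.inr ⟨i, ⟨le_rfl, fun y hy => hy⟩, h, Icc_subset_Ici_self⟩
    · exact Or.inl <| eventually_mem_nhdsWithin.mono fun y (hyb : y < b) hy =>
        h (hy.trans_lt hyb)

lemma eventually_nhdsGT_notMem_or {J : Set α} (hJ : (∃ i j, J = Icc i j) ∨ ∃ i, J = Ici i)
    (c : α) :
    (∀ᶠ y in 𝓝[>] c, y ∉ J) ∨ (∃ a ∈ maxSet J, c < a ∧ Icc c a ⊆ J) ∨ Ici c ⊆ J := by
  rcases hJ with ⟨i, j, rfl⟩ | ⟨i, rfl⟩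
  · by_cases h : i ≤ c ∧ c < j
    · exact Or.inr <| Or.inl ⟨j, ⟨⟨h.1.trans h.2.le, le_rfl⟩, fun y hy => hy.2⟩, h.2,
        Icc_subset_Icc_left h.1⟩
    rcases not_and_or.1 h with hic | hjc
    · exact Or.inl <| mem_of_superset (Ioo_mem_nhdsGT (not_le.1 hic)) fun y hy hy' =>
        hy.2.not_ge hy'.1
    · exact Or.inl <| eventually_mem_nhdsWithin.mono fun y (hcy : c < y) hy =>
        hjc (hcy.trans_le hy.2)
  · by_cases h : i ≤ c
    · exact Or.inr <| Or.inr (Ici_subset_Ici.2 h)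
    · exact Or.inl <| mem_of_superset (Ioo_mem_nhdsGT (not_le.1 h)) fun y hy hy' => hy.2.not_ge hy'

end LinearOrder

-- The clause `i = 0` of `lSet` is absorbed by `𝓝[<] 0 = ⊥`.
lemma mem_lSet_iff {A : Set II} {i : II} : i ∈ lSet A ↔ i ∈ A ∧ ∀ᶠ y in 𝓝[<] i, y ∉ A := by
  refine and_congr_right fun _ => ?_
  rcases eq_zero_or_pos i with rfl | hi
  · simp
  · rw [Filter.Eventually, mem_nhdsLT_iff_exists_Ioo_subset' hi]
    simp [hi.ne', eq_empty_iff_forall_notMem, subset_def]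

lemma mem_rSet_iff {A : Set II} {i : II} : i ∈ rSet A ↔ i ∈ A ∧ ∀ᶠ y in 𝓝[>] i, y ∉ A := by
  refine and_congr_right fun _ => ?_
  rw [Filter.Eventually, mem_nhdsGT_iff_exists_Ioo_subset]
  simp [eq_empty_iff_forall_notMem, subset_def]

lemma notMem_lSet_of_Icc_subset {A : Set II} {a x : II} (hax : a < x) (h : Icc a x ⊆ A) :
    x ∉ lSet A := by
  intro hx
  have := nhdsLT_neBot_of_exists_lt ⟨a, hax⟩
  obtain ⟨y, hyA, hy⟩ := ((mem_lSet_iff.1 hx).2.and (Ioo_mem_nhdsLT hax)).exists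
  exact hyA (h (Ioo_subset_Icc_self hy))

lemma notMem_rSet_of_eventually {A : Set II} {x : II} (h : ∀ᶠ y in 𝓝[>] x, y ∈ A) :
    x ∉ rSet A := fun hx =>
  let ⟨_, hyA, hy⟩ := ((mem_rSet_iff.1 hx).2.and h).exists
  hyA hy

lemma notMem_rSet_of_Icc_subset {A : Set II} {x c : II} (hxc : x < c) (h : Icc x c ⊆ A) :
    x ∉ rSet A :=
  notMem_rSet_of_eventually <| mem_of_superset (Ioo_mem_nhdsGT hxc) (Ioo_subset_Icc_self.trans h)

lemma IsFCI.exists_mem_lSet_Icc_subset {A : Set II} (hA : IsFCI A) {x : II} (hx : x ∈ A) :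
    ∃ b ∈ lSet A, b ≤ x ∧ Icc b x ⊆ A := by
  obtain ⟨k, f, hf, rfl⟩ := hA
  set S := {a ∈ insert x (⋃ m, minSet (f m)) | a ≤ x ∧ Icc a x ⊆ ⋃ m, f m}
  have hS : S.Finite :=
    ((finite_iUnion fun m => (minSet_subsingleton (f m)).finite).insert x).subset (sep_subset _ _)
  obtain ⟨b, ⟨-, hbx, hb⟩, hbmin⟩ :=
    exists_min_image S id hS ⟨x, mem_insert _ _, le_rfl, by simpa using hx⟩
  refine ⟨b, mem_lSet_iff.2 ⟨hb ⟨le_rfl, hbx⟩, ?_⟩, hbx, hb⟩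
  simp only [mem_iUnion, not_exists]
  refine eventually_all.2 fun m => (eventually_nhdsLT_notMem_or (hf m) b).resolve_right ?_
  rintro ⟨a, ha, hab, hsub⟩
  refine (hbmin a ⟨mem_insert_of_mem _ (mem_iUnion.2 ⟨m, ha⟩), hab.le.trans hbx, ?_⟩).not_gt hab
  exact Icc_subset_Icc_union_Icc.trans (union_subset (hsub.trans (subset_iUnion f m)) hb)

lemma IsFCI.exists_mem_rSet_Icc_subset_or_Ici_subset {A : Set II} (hA : IsFCI A) {x : II}
    (hx : x ∈ A) : (∃ c ∈ rSet A, x ≤ c ∧ Icc x c ⊆ A) ∨ Ici x ⊆ A := by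
  obtain ⟨k, f, hf, rfl⟩ := hA
  set S := {a ∈ insert x (⋃ m, maxSet (f m)) | x ≤ a ∧ Icc x a ⊆ ⋃ m, f m}
  have hS : S.Finite :=
    ((finite_iUnion fun m => (maxSet_subsingleton (f m)).finite).insert x).subset (sep_subset _ _)
  obtain ⟨c, ⟨-, hxc, hc⟩, hcmax⟩ :=
    exists_max_image S id hS ⟨x, mem_insert _ _, le_rfl, by simpa using hx⟩
  by_cases hunb : ∃ m, Ici c ⊆ f m
  · obtain ⟨m, hm⟩ := hunb
    exact Or.inr <| Ici_subset_Icc_union_Ici.trans (union_subset hc (hm.trans (subset_iUnion f m)))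
  refine Or.inl ⟨c, mem_rSet_iff.2 ⟨hc ⟨hxc, le_rfl⟩, ?_⟩, hxc, hc⟩
  simp only [mem_iUnion, not_exists]
  refine eventually_all.2 fun m => ?_
  rcases eventually_nhdsGT_notMem_or (hf m) c with h | ⟨a, ha, hca, hsub⟩ | h
  · exact h
  · refine absurd (hcmax a ⟨mem_insert_of_mem _ (mem_iUnion.2 ⟨m, ha⟩), hxc.trans hca.le, ?_⟩)
      hca.not_ge
    exact Icc_subset_Icc_union_Icc.trans (union_subset hc (hsub.trans (subset_iUnion f m)))
  · exact absurd ⟨m, h⟩ hunb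

lemma IsFCI.lSet_nonempty {A : Set II} (hA : IsFCI A) (hne : A.Nonempty) : (lSet A).Nonempty :=
  let ⟨_, hx⟩ := hne
  let ⟨b, hb, _⟩ := hA.exists_mem_lSet_Icc_subset hx
  ⟨b, hb⟩

lemma IsFCI.minSet_subset_lSet {A : Set II} (hA : IsFCI A) :
    minSet (lSet A ∪ rSet A) ⊆ lSet A := by
  rintro m ⟨hm | hm, hmin⟩
  · exact hm
  · obtain ⟨b, hb, hbm, -⟩ := hA.exists_mem_lSet_Icc_subset hm.1
    rwa [← le_antisymm hbm (hmin b (Or.inl hb))]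

lemma IsFCI.sInvSet_subset_lSet_diff {A : Set II} (hA : IsFCI A) :
    sInvSet (lSet A ∪ rSet A) (rSet A \ lSet A) ⊆ lSet A \ rSet A := by
  rintro i ⟨hiD, j, -, hij, hjmin, hjC, hjB⟩
  obtain ⟨b, hb, hbj, hbsub⟩ := hA.exists_mem_lSet_Icc_subset hjC.1
  have hbj' : b < j := hbj.lt_of_ne (by rintro rfl; exact hjB hb)
  have hbi : b ≤ i := not_lt.1 fun hib => (hjmin b (Or.inl hb) hib).not_gt hbj'
  have hiC : i ∉ rSet A := notMem_rSet_of_Icc_subset hij ((Icc_subset_Icc_left hbi).trans hbsub)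
  exact ⟨hiD.resolve_right hiC, hiC⟩

lemma IsFCI.lSet_diff_subset_sInvSet_union_maxSet {A : Set II} (hA : IsFCI A) :
    lSet A \ rSet A ⊆
      sInvSet (lSet A ∪ rSet A) (rSet A \ lSet A) ∪ maxSet (lSet A ∪ rSet A) := by
  rintro b ⟨hb, hbC⟩
  rcases hA.exists_mem_rSet_Icc_subset_or_Ici_subset hb.1 with ⟨c, hc, hbc, hsub⟩ | hsub
  · have hbc' : b < c := hbc.lt_of_ne (by rintro rfl; exact hbC hc)
    obtain ⟨j, hjD, hbj, hjc, hjmin⟩ :=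
      exists_succ_mem_of_lt (hA.lSet_finite.union hA.rSet_finite) (Or.inr hc) hbc'
    have hjB : j ∉ lSet A := notMem_lSet_of_Icc_subset hbj ((Icc_subset_Icc_right hjc).trans hsub)
    exact Or.inl ⟨Or.inl hb, j, hjD, hbj, hjmin, hjD.resolve_left hjB, hjB⟩
  refine Or.inr ⟨Or.inl hb, fun d hd => not_lt.1 fun hbd => ?_⟩
  rcases hd with hdB | hdC
  · exact notMem_lSet_of_Icc_subset hbd (Icc_subset_Ici_self.trans hsub) hdB
  · exact notMem_rSet_of_Icc_subset (lt_add_one d)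
      (Icc_subset_Ici_self.trans ((Ici_subset_Ici.2 hbd.le).trans hsub)) hdC

lemma isFCI_Ici (i : II) : IsFCI (Ici i) :=
  ⟨1, fun _ => Ici i, fun _ => Or.inr ⟨i, rfl⟩, (iUnion_const _).symm⟩

lemma isFCI_Iic (i : II) : IsFCI (Iic i) :=
  ⟨1, fun _ => Icc 0 i, fun _ => Or.inl ⟨0, i, rfl⟩, by ext; simp⟩

lemma IsFCI.biUnion {ι : Type*} {s : Set ι} (hs : s.Finite) {f : ι → Set II}
    (hf : ∀ i ∈ s, IsFCI (f i)) : IsFCI (⋃ i ∈ s, f i) := by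
  induction s, hs using Set.Finite.induction_on with
  | empty => simpa using isFCI_empty
  | @insert a s _ _ ih =>
    rw [biUnion_insert]
    exact (hf a (mem_insert _ _)).union (ih fun i hi => hf i (mem_insert_of_mem _ hi))

lemma IsFCI.biInter {ι : Type*} {s : Set ι} (hs : s.Finite) {f : ι → Set II}
    (hf : ∀ i ∈ s, IsFCI (f i)) : IsFCI (⋂ i ∈ s, f i) := by
  induction s, hs using Set.Finite.induction_on with
  | empty =>
    rw [biInter_empty, ← Ici_bot]
    exact isFCI_Ici ⊥
  | @insert a s _ _ ih =>
    rw [biInter_insert]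
    exact (hf a (mem_insert _ _)).inter (ih fun i hi => hf i (mem_insert_of_mem _ hi))

def fciOfEndpoints (B C : Set II) : Set II := {x | ∃ b ∈ B, b ≤ x ∧ ∀ c ∈ C, b ≤ c → x ≤ c}

lemma subset_fciOfEndpoints (B C : Set II) : B ⊆ fciOfEndpoints B C :=
  fun b hb => ⟨b, hb, le_rfl, fun _ _ => id⟩

lemma isFCI_fciOfEndpoints {B C : Set II} (hB : B.Finite) (hC : C.Finite) :
    IsFCI (fciOfEndpoints B C) := by
  have h : fciOfEndpoints B C = ⋃ b ∈ B, Ici b ∩ ⋂ c ∈ {c ∈ C | b ≤ c}, Iic c := by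
    ext x
    simp only [fciOfEndpoints, mem_ofPred_eq, mem_iUnion, mem_inter_iff, mem_iInter, mem_Ici,
      mem_Iic, exists_prop, and_imp]
  rw [h]
  exact IsFCI.biUnion hB fun b _ =>
    (isFCI_Ici b).inter (IsFCI.biInter (hC.subset (sep_subset _ _)) fun c _ => isFCI_Iic c)

lemma lSet_fciOfEndpoints {B C : Set II} (hD : (B ∪ C).Finite)
    (h : B \ C ⊆ sInvSet (B ∪ C) (C \ B) ∪ maxSet (B ∪ C)) :
    lSet (fciOfEndpoints B C) = B := by
  refine subset_antisymm (fun x hx => ?_) fun b hb =>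
    mem_lSet_iff.2 ⟨subset_fciOfEndpoints B C hb, ?_⟩
  · obtain ⟨b, hb, hbx, hbC⟩ := hx.1
    rcases hbx.eq_or_lt with rfl | hbx
    · exact hb
    · exact absurd hx <| notMem_lSet_of_Icc_subset hbx fun z hz =>
        ⟨b, hb, hz.1, fun c hc hbc => hz.2.trans (hbC c hc hbc)⟩
  filter_upwards [eventually_mem_nhdsWithin, eventually_nhdsLT_forall_lt hD b]
    with y (hyb : y < b) hy ⟨b', hb', hb'y, hb'C⟩
  -- `y` is cut off from `b'` by the predecessor `p` of `b`, which cannot lie in `B \ C`.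
  obtain ⟨p, hpD, hpb, hpmax, hpsucc⟩ := exists_pred_mem_of_lt hD (Or.inl hb') (hb'y.trans_lt hyb)
  have hpC : p ∈ C := by
    by_contra hpC
    rcases h ⟨hpD.resolve_right hpC, hpC⟩ with ⟨-, j, hjD, hpj, hjmin, hjCB⟩ | hpmaxD
    · exact hjCB.2 (le_antisymm (hjmin b (Or.inl hb) hpb) (hpsucc j hjD hpj) ▸ hb)
    · exact (hpmaxD.2 b (Or.inl hb)).not_gt hpb
  exact (hy p hpD hpb).not_ge (hb'C p hpC (hpmax b' (Or.inl hb') (hb'y.trans_lt hyb)))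

lemma rSet_fciOfEndpoints {B C : Set II} (hD : (B ∪ C).Finite)
    (hmin : ∃ m ∈ minSet (B ∪ C), m ∈ B) (h : sInvSet (B ∪ C) (C \ B) ⊆ B \ C) :
    rSet (fciOfEndpoints B C) = C := by
  refine subset_antisymm (fun x hx => ?_) fun c hc => mem_rSet_iff.2 ⟨?_, ?_⟩
  · by_contra hxC
    obtain ⟨b, hb, hbx, hbC⟩ := hx.1
    refine notMem_rSet_of_eventually ?_ hx
    filter_upwards [eventually_mem_nhdsWithin, eventually_nhdsGT_forall_lt hD x]
      with y (hxy : x < y) hy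
    exact ⟨b, hb, hbx.trans hxy.le, fun c hc hbc =>
      (hy c (Or.inr hc) ((hbC c hc hbc).lt_of_ne (by rintro rfl; exact hxC hc))).le⟩
  · by_cases hcB : c ∈ B
    · exact subset_fciOfEndpoints B C hcB
    obtain ⟨m, hm, hmB⟩ := hmin
    have hmc : m < c := (hm.2 c (Or.inr hc)).lt_of_ne (by rintro rfl; exact hcB hmB)
    obtain ⟨p, hpD, hpc, -, hpsucc⟩ := exists_pred_mem_of_lt hD hm.1 hmc
    have hp : p ∈ B \ C := h ⟨hpD, c, Or.inr hc, hpc, hpsucc, hc, hcB⟩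
    exact ⟨p, hp.1, hpc.le, fun c' hc' hpc' =>
      hpsucc c' (Or.inr hc') (hpc'.lt_of_ne (by rintro rfl; exact hp.2 hc'))⟩
  · filter_upwards [eventually_mem_nhdsWithin, eventually_nhdsGT_forall_lt hD c]
      with y (hcy : c < y) hy ⟨b, hb, hby, hbC⟩
    have hbc : b ≤ c := not_lt.1 fun hcb => (hy b (Or.inl hb) hcb).not_ge hby
    exact (hbC c hc hbc).not_gt hcy

/-- Let `B, C` be finite subsets of `𝕀`.  The following are equivalent:
(1) there exists a nonempty `A ∈ P_fci(𝕀)` with `l(A) = B` and `r(A) = C`;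
(2) `B ≠ ∅`, `min(B ∪ C) ∈ B`, and either
(a) `max(B ∪ C) ∈ C` and `𝔰⁻¹(B ∪ C, C ∖ B) = B ∖ C`, or
(b) `max(B ∪ C) ∈ B ∖ C` and `𝔰⁻¹(B ∪ C, C ∖ B) ∪ {max(B ∪ C)} = B ∖ C`. -/
theorem exists_fci_with_endpoints_iff (B C : Set II) (hB : B.Finite) (hC : C.Finite) :
    (∃ A : Set II, IsFCI A ∧ A ≠ ∅ ∧ lSet A = B ∧ rSet A = C) ↔
      (B ≠ ∅ ∧ (∃ m ∈ minSet (B ∪ C), m ∈ B) ∧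
        (((∃ m ∈ maxSet (B ∪ C), m ∈ C) ∧ sInvSet (B ∪ C) (C \ B) = B \ C) ∨
          ((∃ m ∈ maxSet (B ∪ C), m ∈ B \ C) ∧
            sInvSet (B ∪ C) (C \ B) ∪ maxSet (B ∪ C) = B \ C))) := by
  have hD : (B ∪ C).Finite := hB.union hC
  constructor
  · rintro ⟨A, hA, hA0, rfl, rfl⟩
    have hBne := hA.lSet_nonempty (nonempty_iff_ne_empty.2 hA0)
    have hDne : (lSet A ∪ rSet A).Nonempty := hBne.mono subset_union_left
    obtain ⟨m, hm⟩ := minSet_nonempty hD hDne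
    exact ⟨hBne.ne_empty, ⟨m, hm, hA.minSet_subset_lSet hm⟩,
      (sInvSet_cases_iff (maxSet_nonempty hD hDne)).2
        ⟨hA.sInvSet_subset_lSet_diff, hA.lSet_diff_subset_sInvSet_union_maxSet⟩⟩
  · rintro ⟨hB0, hmin, hcases⟩
    have hBne := nonempty_iff_ne_empty.2 hB0
    obtain ⟨hsub, hsup⟩ :=
      (sInvSet_cases_iff (maxSet_nonempty hD (hBne.mono subset_union_left))).1 hcases
    exact ⟨fciOfEndpoints B C, isFCI_fciOfEndpoints hB hC,
      (hBne.mono (subset_fciOfEndpoints B C)).ne_empty, lSet_fciOfEndpoints hD hsup,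
      rSet_fciOfEndpoints hD hmin hsub⟩

end MCpaper
end

section
/- There exists an L_WSO-formula φ_∈(X_l, X_r, Z) such that for every i ∈ 𝕀 and every A ∈ P_fci(𝕀): i ∈ A if and only if WSO(𝕀) ⊨ φ_∈(l(A), r(A), {i}). -/
/-!
A point `i` lies in a finite union of closed intervals `A` iff some left endpoint `l ≤ i` has no
right endpoint in `[l, i)`. Both directions rest on the fact that a nonempty finite union of
closed intervals has a least element, and a greatest one when it is bounded: if `i ∉ A`, the
greatest point of `A ∩ [l, i]` is a right endpoint below `i`; if `i ∈ A` and `r < i` is a right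
endpoint, the least point of `A` beyond the gap after `r` is a left endpoint in `(r, i]`.
The formula expresses this with singletons, writing `{a} ≤ {b}` as `min ({a} ∪ {b}) = {a}`.
-/

namespace MCpaper

open FirstOrder Language Structure Set

section Extrema

variable {α ι : Type*} [LinearOrder α] [Finite ι] {s : ι → Set α}

theorem exists_isLeast_iUnion (hs : ∀ m, (s m).Nonempty → ∃ a, IsLeast (s m) a)
    (hne : (⋃ m, s m).Nonempty) : ∃ a, IsLeast (⋃ m, s m) a := by
  choose g hg using fun m : {m // (s m).Nonempty} => hs m m.2
  obtain ⟨x, hx⟩ := hne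
  obtain ⟨m, hm⟩ := mem_iUnion.1 hx
  have : Nonempty {m // (s m).Nonempty} := ⟨⟨m, x, hm⟩⟩
  obtain ⟨m₀, hm₀⟩ := Finite.exists_min g
  refine ⟨g m₀, mem_iUnion.2 ⟨m₀, (hg m₀).1⟩, fun y hy => ?_⟩
  obtain ⟨m, hm⟩ := mem_iUnion.1 hy
  exact (hm₀ ⟨m, y, hm⟩).trans ((hg ⟨m, y, hm⟩).2 hm)

theorem exists_isGreatest_iUnion (hs : ∀ m, (s m).Nonempty → ∃ a, IsGreatest (s m) a)
    (hne : (⋃ m, s m).Nonempty) : ∃ a, IsGreatest (⋃ m, s m) a :=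
  exists_isLeast_iUnion (α := αᵒᵈ) hs hne

end Extrema

lemma isFCI_Icc (a b : II) : IsFCI (Icc a b) :=
  ⟨1, fun _ => Icc a b, fun _ => Or.inl ⟨a, b, rfl⟩, (iUnion_const _).symm⟩

lemma IsFCI.exists_isLeast {A : Set II} (hA : IsFCI A) (hne : A.Nonempty) :
    ∃ a, IsLeast A a := by
  obtain ⟨k, f, hf, rfl⟩ := hA
  refine exists_isLeast_iUnion (fun m hm => ?_) hne
  rcases hf m with ⟨a, b, h⟩ | ⟨a, h⟩ <;> rw [h] at hm ⊢
  exacts [⟨a, isLeast_Icc (nonempty_Icc.1 hm)⟩, ⟨a, isLeast_Ici⟩]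

lemma IsFCI.exists_isGreatest {A : Set II} (hA : IsFCI A) (hne : A.Nonempty)
    (hbdd : BddAbove A) : ∃ a, IsGreatest A a := by
  obtain ⟨k, f, hf, rfl⟩ := hA
  refine exists_isGreatest_iUnion (fun m hm => ?_) hne
  have hbdd_m : BddAbove (f m) := hbdd.mono (subset_iUnion f m)
  rcases hf m with ⟨a, b, h⟩ | ⟨a, h⟩ <;> rw [h] at hm hbdd_m ⊢
  exacts [⟨b, isGreatest_Icc (nonempty_Icc.1 hm)⟩, (not_bddAbove_Ici a hbdd_m).elim]

section Endpoints

variable {A : Set II}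

/-- The least point of `A` is a left endpoint. -/
lemma exists_mem_lSet_le (hA : IsFCI A) {i : II} (hi : i ∈ A) : ∃ l ∈ lSet A, l ≤ i := by
  obtain ⟨l, hlA, hl⟩ := hA.exists_isLeast ⟨i, hi⟩
  refine ⟨l, ⟨hlA, ?_⟩, hl hi⟩
  rcases eq_zero_or_pos l with h | h
  · exact Or.inl h
  · exact Or.inr ⟨0, h, eq_empty_of_forall_notMem fun x hx => (hl hx.2).not_gt hx.1.2⟩

lemma exists_mem_lSet_of_mem_rSet (hA : IsFCI A) {r i : II} (hr : r ∈ rSet A) (hri : r < i)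
    (hi : i ∈ A) : ∃ l ∈ lSet A, r < l ∧ l ≤ i := by
  obtain ⟨r'', hrr'', hgap⟩ := hr.2
  obtain ⟨l, ⟨hlA, hcl, hli⟩, hl⟩ :=
    (hA.inter (isFCI_Icc (min r'' i) i)).exists_isLeast ⟨i, hi, min_le_right _ _, le_rfl⟩
  have hrl : r < l := (lt_min hrr'' hri).trans_le hcl
  refine ⟨l, ⟨hlA, Or.inr ⟨r, hrl, eq_empty_of_forall_notMem ?_⟩⟩, hrl, hli⟩
  rintro x ⟨⟨hrx, hxl⟩, hxA⟩
  rcases lt_or_ge x (min r'' i) with hx | hx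
  · exact hgap.subset ⟨⟨hrx, hx.trans_le (min_le_left _ _)⟩, hxA⟩
  · exact (hl ⟨hxA, hx, hxl.le.trans hli⟩).not_gt hxl

lemma exists_mem_rSet_of_notMem (hA : IsFCI A) {l i : II} (hl : l ∈ A) (hli : l ≤ i)
    (hi : i ∉ A) : ∃ r ∈ rSet A, l ≤ r ∧ r < i := by
  obtain ⟨r, ⟨hrA, hlr, hri⟩, hr⟩ :=
    (hA.inter (isFCI_Icc l i)).exists_isGreatest ⟨l, hl, le_rfl, hli⟩ ⟨i, fun x hx => hx.2.2⟩
  have hri' : r < i := hri.lt_of_ne (ne_of_mem_of_not_mem hrA hi)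
  refine ⟨r, ⟨hrA, i, hri', eq_empty_of_forall_notMem ?_⟩, hlr, hri'⟩
  rintro x ⟨⟨hrx, hxi⟩, hxA⟩
  exact (hr ⟨hxA, hlr.trans hrx.le, hxi.le⟩).not_gt hrx

theorem mem_iff_exists_lSet (hA : IsFCI A) (i : II) :
    i ∈ A ↔ ∃ l ∈ lSet A, l ≤ i ∧ ∀ r ∈ rSet A, l ≤ r → r ≤ i → r = i := by
  constructor
  · intro hi
    obtain ⟨l₀, hl₀, hl₀i⟩ := exists_mem_lSet_le hA hi
    obtain ⟨l, ⟨hl, hli⟩, hmax⟩ :=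
      exists_max_image (lSet A ∩ Iic i) id (hA.lSet_finite.inter_of_left _) ⟨l₀, hl₀, hl₀i⟩
    refine ⟨l, hl, hli, fun r hr hlr hri => hri.eq_or_lt.resolve_right fun hri' => ?_⟩
    obtain ⟨l', hl', hrl', hl'i⟩ := exists_mem_lSet_of_mem_rSet hA hr hri' hi
    exact (hmax l' ⟨hl', hl'i⟩).not_gt (hlr.trans_lt hrl')
  · rintro ⟨l, hl, hli, H⟩
    by_contra hi
    obtain ⟨r, hr, hlr, hri⟩ := exists_mem_rSet_of_notMem hA hl.1 hli hi
    exact hri.ne (H r hr hlr hri.le)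

end Endpoints

section Singletons

variable {α : Type*} [LinearOrder α]

lemma minSet_eq_self_iff {s : Set α} : minSet s = s ↔ s.Subsingleton :=
  ⟨fun h => h ▸ minSet_subsingleton s,
    fun h => (minSet_subset s).antisymm fun _ hx => ⟨hx, fun _ hy => (h hx hy).le⟩⟩

lemma minSet_singleton_union_singleton {a b : α} : minSet ({a} ∪ {b}) = {a} ↔ a ≤ b := by
  constructor
  · intro h
    exact (h.symm ▸ mem_singleton a : a ∈ minSet ({a} ∪ {b})).2 b (Or.inr rfl)
  · intro hab
    ext x
    refine ⟨fun ⟨hx, hle⟩ => ?_, ?_⟩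
    · exact hx.elim id fun hxb => le_antisymm (hle a (Or.inl rfl)) (hxb ▸ hab)
    · rintro rfl
      exact ⟨Or.inl rfl, fun j hj => hj.elim (fun h => h.ge) fun h => h ▸ hab⟩

end Singletons

def single (a : II) : FinSub := ⟨{a}, finite_singleton a⟩

lemma coe_single (a : II) : (single a : Set II) = {a} := rfl

lemma single_inj {a b : II} : single a = single b ↔ a = b :=
  Subtype.ext_iff.trans singleton_eq_singleton_iff

lemma exists_finSub_singleton {P : FinSub → Prop} :
    (∃ x : FinSub, (∃ a, x.1 = {a}) ∧ P x) ↔ ∃ a, P (single a) :=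
  ⟨fun ⟨x, ⟨a, hx⟩, hP⟩ => ⟨a, (Subtype.ext hx : x = single a) ▸ hP⟩,
    fun ⟨a, hP⟩ => ⟨single a, ⟨a, rfl⟩, hP⟩⟩

lemma forall_finSub_singleton {P : FinSub → Prop} :
    (∀ x : FinSub, (∃ a, x.1 = {a}) → P x) ↔ ∀ a, P (single a) :=
  ⟨fun h a => h (single a) ⟨a, rfl⟩, fun h x ⟨a, hx⟩ => (Subtype.ext hx : x = single a) ▸ h a⟩

section Formulas

open Term BoundedFormula

variable {β : Type*}

def unionT (s t : LWSO.Term β) : LWSO.Term β := func WSOFunc.union ![s, t]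

def interT (s t : LWSO.Term β) : LWSO.Term β := func WSOFunc.inter ![s, t]

def minT (t : LWSO.Term β) : LWSO.Term β := func WSOFunc.min ![t]

def botT : LWSO.Term β := func WSOFunc.bot ![]

variable {γ : Type*} {n : ℕ}

def isSingletonF (t : LWSO.Term (γ ⊕ Fin n)) : LWSO.BoundedFormula γ n :=
  (minT t =' t) ⊓ ∼(t =' botT)

def subsetF (s t : LWSO.Term (γ ⊕ Fin n)) : LWSO.BoundedFormula γ n := interT s t =' s

/-- On singletons `{a}`, `{b}` this says `a ≤ b`. -/
def leF (s t : LWSO.Term (γ ⊕ Fin n)) : LWSO.BoundedFormula γ n := minT (unionT s t) =' s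

variable (v : γ → FinSub) (xs : Fin n → FinSub) (s t : LWSO.Term (γ ⊕ Fin n))

lemma realize_isSingletonF :
    (isSingletonF s).Realize v xs ↔ ∃ a, (s.realize (Sum.elim v xs)).1 = {a} := by
  simp only [isSingletonF, realize_inf, realize_not, realize_bdEqual, Subtype.ext_iff]
  exact (and_congr minSet_eq_self_iff nonempty_iff_ne_empty.symm).trans
    (and_comm.trans exists_eq_singleton_iff_nonempty_subsingleton.symm)

lemma realize_subsetF :
    (subsetF s t).Realize v xs ↔ (s.realize (Sum.elim v xs)).1 ⊆ (t.realize (Sum.elim v xs)).1 :=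
  Subtype.ext_iff.trans inter_eq_left

lemma realize_leF :
    (leF s t).Realize v xs ↔
      minSet ((s.realize (Sum.elim v xs)).1 ∪ (t.realize (Sum.elim v xs)).1) =
        (s.realize (Sum.elim v xs)).1 :=
  Subtype.ext_iff

/-- `φ_∈(X_l, X_r, Z)`: some `{l} ⊆ X_l` with `l ≤ Z` has no `{r} ⊆ X_r` with `l ≤ r ≤ Z`
other than `Z` itself. -/
def phiMem : LWSO.Formula (Fin 3) :=
  ∃' (isSingletonF &0 ⊓ subsetF &0 (var (Sum.inl 0)) ⊓ leF &0 (var (Sum.inl 2)) ⊓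
    ∀' (isSingletonF &1 ⟹ subsetF &1 (var (Sum.inl 1)) ⟹ leF &0 &1 ⟹
      leF &1 (var (Sum.inl 2)) ⟹ (&1 =' var (Sum.inl 2))))

end Formulas

lemma realize_phiMem (X Y : FinSub) (i : II) :
    phiMem.Realize ![X, Y, single i] ↔
      ∃ l ∈ X.1, l ≤ i ∧ ∀ r ∈ Y.1, l ≤ r → r ≤ i → r = i := by
  have snoc_one (p : Fin 1 → FinSub) (x : FinSub) : (Fin.snoc p x : Fin 2 → FinSub) 1 = x := rfl
  simp only [phiMem, Formula.Realize, BoundedFormula.realize_ex, BoundedFormula.realize_inf,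
    BoundedFormula.realize_all, BoundedFormula.realize_imp, realize_isSingletonF, realize_subsetF,
    realize_leF, BoundedFormula.realize_bdEqual, Term.realize_var, Function.comp_apply,
    Sum.elim_inl, Sum.elim_inr, Fin.snoc_zero, Fin.snoc_apply_zero, snoc_one,
    Matrix.cons_val_zero, Matrix.cons_val_one, Matrix.cons_val_two, Matrix.tail_cons,
    Matrix.head_cons, and_assoc]
  simp only [exists_finSub_singleton, forall_finSub_singleton, coe_single, singleton_subset_iff,
    minSet_singleton_union_singleton, single_inj]

/-- There exists an `L_WSO`-formula `φ_∈(X_l, X_r, Z)` such that for every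
`i ∈ 𝕀` and every `A ∈ P_fci(𝕀)`: `i ∈ A` iff `WSO(𝕀) ⊨ φ_∈(l(A), r(A), {i})`.
(The hypotheses `hl`, `hr`, true for every `A ∈ P_fci(𝕀)`, record that `l(A)` and `r(A)` are
finite, hence elements of `WSO(𝕀)`.) -/
theorem mem_definable_from_endpoints :
    ∃ φ : LWSO.Formula (Fin 3),
      ∀ (i : II) (A : Set II), IsFCI A →
        ∀ (hl : (lSet A).Finite) (hr : (rSet A).Finite),
          (i ∈ A ↔ φ.Realize (![⟨lSet A, hl⟩, ⟨rSet A, hr⟩, ⟨{i}, finite_singleton i⟩] : Fin 3 → FinSub)) :=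
  ⟨phiMem, fun i A hA hl hr =>
    (mem_iff_exists_lSet hA i).trans (realize_phiMem ⟨lSet A, hl⟩ ⟨rSet A, hr⟩ i).symm⟩

end MCpaper
end
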